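/- Conversely, if χ : (r_1, r_2) → ℂ is differentiable, avoids the zeros and critical points of B, satisfies χ'(r) = B(χ(r))/(r·B'(χ(r))) and B(χ(r_0)) = r_0·e^{it_0} for some r_0 ∈ (r_1, r_2) with r_0 > 0, then B(χ(r)) = r·e^{it_0} for all r ∈ (r_1, r_2). -/

import Mathlib

/-!
Along a solution of `χ' = B(χ) / (r B'(χ))` the chain rule gives `(B ∘ χ)' = B(χ) / r`, the
logarithmic derivative of `r`. Hence `B(χ(r)) / r` has derivative zero on the interval, so it is
constant there, and the initial condition at `r₀` fixes the constant to `e^{i t₀}`.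
-/

open Set

theorem hasDerivAt_comp_of_hasDerivAt_div_mul_deriv {B : ℂ → ℂ} {χ : ℝ → ℂ} {r : ℝ}
    (hcrit : deriv B (χ r) ≠ 0)
    (hode : HasDerivAt χ (B (χ r) / ((r : ℂ) * deriv B (χ r))) r) :
    HasDerivAt (fun s => B (χ s)) (B (χ r) / r) r := by
  -- `deriv B` is `0` wherever `B` is not differentiable, so `hcrit` yields differentiability.
  refine ((differentiableAt_of_deriv_ne_zero hcrit).hasDerivAt.comp r hode).congr_deriv ?_
  field_simp

theorem hasDerivAt_div_ofReal_eq_zero {f : ℝ → ℂ} {r : ℝ} (hr : r ≠ 0)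
    (hf : HasDerivAt f (f r / r) r) :
    HasDerivAt (fun s => f s / s) 0 r := by
  have hr' : (r : ℂ) ≠ 0 := Complex.ofReal_ne_zero.mpr hr
  refine (hf.div (hasDerivAt_id r).ofReal_comp hr').congr_deriv ?_
  simp [div_mul_cancel₀ _ hr']

theorem IsOpen.div_ofReal_eq_of_hasDerivAt_eq_div {s : Set ℝ} (hs : IsOpen s)
    (hs' : IsPreconnected s) (hs₀ : (0 : ℝ) ∉ s) {f : ℝ → ℂ}
    (hf : ∀ r ∈ s, HasDerivAt f (f r / r) r) {r r₀ : ℝ} (hr : r ∈ s) (hr₀ : r₀ ∈ s) :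
    f r / r = f r₀ / r₀ := by
  have hquot : ∀ x ∈ s, HasDerivAt (fun s => f s / s) 0 x := fun x hx =>
    hasDerivAt_div_ofReal_eq_zero (ne_of_mem_of_not_mem hx hs₀) (hf x hx)
  exact hs.is_const_of_deriv_eq_zero hs'
    (fun x hx => (hquot x hx).differentiableAt.differentiableWithinAt)
    (fun x hx => (hquot x hx).deriv) hr hr₀

theorem ode_to_implicit_general (B : ℂ → ℂ)
    (r₁ r₂ r₀ t₀ : ℝ) (hr₁ : 0 ≤ r₁) (hr₀ : r₀ ∈ Set.Ioo r₁ r₂)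
    (χ : ℝ → ℂ)
    (hcrit : ∀ r ∈ Set.Ioo r₁ r₂, deriv B (χ r) ≠ 0)
    (hode : ∀ r ∈ Set.Ioo r₁ r₂,
      HasDerivAt χ (B (χ r) / ((r : ℂ) * deriv B (χ r))) r)
    (hinit : B (χ r₀) = (r₀ : ℂ) * Complex.exp (Complex.I * t₀)) :
    ∀ r ∈ Set.Ioo r₁ r₂, B (χ r) = (r : ℂ) * Complex.exp (Complex.I * t₀) := by
  intro r hr
  have hpos : ∀ x ∈ Ioo r₁ r₂, (x : ℂ) ≠ 0 := fun x hx =>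
    Complex.ofReal_ne_zero.mpr (hr₁.trans_lt hx.1).ne'
  have hconst : B (χ r) / r = B (χ r₀) / r₀ :=
    isOpen_Ioo.div_ofReal_eq_of_hasDerivAt_eq_div isPreconnected_Ioo
      (fun h => lt_irrefl _ (hr₁.trans_lt h.1))
      (fun x hx => hasDerivAt_comp_of_hasDerivAt_div_mul_deriv (hcrit x hx) (hode x hx)) hr hr₀
  rw [hinit, mul_div_cancel_left₀ _ (hpos r₀ hr₀), div_eq_iff (hpos r hr)] at hconst
  rw [hconst, mul_comm]

/-- Conversely, a solution `χ` of the ODE `χ'(r) = B(χ(r))/(r B'(χ(r)))` on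
`(r₁, r₂) ⊂ (0, ∞)` with initial condition `B(χ(r₀)) = r₀ e^{i t₀}` satisfies
`B(χ(r)) = r e^{i t₀}` for all `r ∈ (r₁, r₂)`. -/
theorem ode_to_implicit (n : ℕ) (a : Fin n → ℂ) (ha : ∀ k, ‖a k‖ < 1)
    (ε : ℂ) (hε : ‖ε‖ = 1) (B : ℂ → ℂ)
    (hB : B = fun z => ε * ∏ k, (z - a k) / (1 - (starRingEnd ℂ) (a k) * z))
    (r₁ r₂ r₀ t₀ : ℝ) (hr₁ : 0 ≤ r₁) (hr₀ : r₀ ∈ Set.Ioo r₁ r₂) (hr₀pos : 0 < r₀)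
    (χ : ℝ → ℂ)
    (hden : ∀ r ∈ Set.Ioo r₁ r₂, ∀ k, 1 - (starRingEnd ℂ) (a k) * χ r ≠ 0)
    (hne : ∀ r ∈ Set.Ioo r₁ r₂, B (χ r) ≠ 0)
    (hcrit : ∀ r ∈ Set.Ioo r₁ r₂, deriv B (χ r) ≠ 0)
    (hode : ∀ r ∈ Set.Ioo r₁ r₂,
      HasDerivAt χ (B (χ r) / ((r : ℂ) * deriv B (χ r))) r)
    (hinit : B (χ r₀) = (r₀ : ℂ) * Complex.exp (Complex.I * t₀)) :
    ∀ r ∈ Set.Ioo r₁ r₂, B (χ r) = (r : ℂ) * Complex.exp (Complex.I * t₀) :=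
  ode_to_implicit_general B r₁ r₂ r₀ t₀ hr₁ hr₀ χ hcrit hode hinit
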